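/- arXiv:2603.23424 — 2 statements merged into one kernel-verified Lean document; each statement's English description precedes it below -/
import Mathlib

section
/- Fix an integer s ≥ 2 and a real number θ > 0. There exist constants C > 0 and c > 0 such that for all integers p ≥ 1 and m ≥ 1 with p ≥ θ·m, R_{s,p}(m) ≤ C·p·M^p·ζ_c^{-m}·m^{-3/2}·e^{-c·p}. -/
/-- Raney number `R_{s,p}(n) = (p/(s·n+p))·C(s·n+p, n)` as a real number. -/
noncomputable def raney (s p n : ℕ) : ℝ :=
  (p : ℝ) / (s * n + p) * (Nat.choose (s * n + p) n : ℝ)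

/-- The analytic threshold `ζ_c = (s-1)^{s-1}/s^s`. -/
noncomputable def zetaC (s : ℕ) : ℝ := ((s : ℝ) - 1) ^ (s - 1) / (s : ℝ) ^ s

/-- `M = s/(s-1)`. -/
noncomputable def Mconst (s : ℕ) : ℝ := (s : ℝ) / ((s : ℝ) - 1)

/-!
Since `p / (s m + p) ≤ 1` it suffices to bound `C(s m + p, m)`. A single term of the binomial
expansion of `(t / s + (s - 1) / s) ^ (s m + p)` gives, for every `t > 0`,
`C(s m + p, m) ≤ M^p ζ_c^{-m} t^{-m} exp (-(1 - t) (s m + p) / s)`: at `t = 1` this is the bound at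
the critical point, and tilting to `t = 1 / (1 + η)` with `η = θ / (2 s)` gains a factor `exp (-κ p)`
as soon as `p ≥ θ m`. Half of that gain pays for `m^{3/2}`, since `exp (-κ θ m / 2)` decays faster
than any power of `m`, and the factor `p ≥ 1` costs nothing.
-/

open Real

lemma raney_le_choose (s p n : ℕ) : raney s p n ≤ (s * n + p).choose n := by
  unfold raney
  exact mul_le_of_le_one_left (Nat.cast_nonneg _)
    (div_le_one_of_le₀ (le_add_of_nonneg_left (by positivity)) (by positivity))

lemma choose_mul_pow_mul_pow_le_add_pow {R : Type*} [CommSemiring R] [PartialOrder R]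
    [IsOrderedRing R] {x y : R} (hx : 0 ≤ x) (hy : 0 ≤ y) (k l : ℕ) :
    ((k + l).choose k : R) * x ^ k * y ^ l ≤ (x + y) ^ (k + l) := by
  rw [add_pow]
  have := Finset.single_le_sum (f := fun i => x ^ i * y ^ (k + l - i) * ((k + l).choose i : R))
    (fun i _ => by positivity) (Finset.mem_range.2 (by omega : k < k + l + 1))
  simpa [mul_comm, mul_left_comm, mul_assoc] using this

lemma Mconst_pos {s : ℕ} (hs : 2 ≤ s) : 0 < Mconst s := by
  have : (2 : ℝ) ≤ s := by exact_mod_cast hs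
  exact div_pos (by linarith) (by linarith)

lemma zetaC_pos {s : ℕ} (hs : 1 ≤ s) : 0 < zetaC s := by
  rcases hs.eq_or_lt with rfl | h
  · norm_num [zetaC]
  · have : (1 : ℝ) < s := by exact_mod_cast h
    exact div_pos (pow_pos (by linarith) _) (pow_pos (by linarith) _)

lemma div_pow_mul_sub_one_div_pow_eq (s m p : ℕ) (hs : 2 ≤ s) (t : ℝ) :
    (t / s) ^ m * (((s : ℝ) - 1) / s) ^ ((s - 1) * m + p)
      = t ^ m * zetaC s ^ m / Mconst s ^ p := by
  obtain ⟨u, rfl⟩ : ∃ u, s = u + 1 := ⟨s - 1, by omega⟩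
  have hu : (u : ℝ) ≠ 0 := by exact_mod_cast (by omega : u ≠ 0)
  simp only [zetaC, Mconst, Nat.add_sub_cancel, Nat.cast_add, Nat.cast_one, add_sub_cancel_right,
    div_pow, pow_add, pow_mul]
  field_simp
  rw [mul_pow, mul_assoc]

lemma choose_le_mul_inv_pow_mul_exp (s m p : ℕ) (hs : 2 ≤ s) {t : ℝ} (ht : 0 < t) :
    ((s * m + p).choose m : ℝ)
      ≤ Mconst s ^ p * (zetaC s)⁻¹ ^ m * t⁻¹ ^ m * exp (-((1 - t) * (s * m + p) / s)) := by
  have hs' : (2 : ℝ) ≤ s := by exact_mod_cast hs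
  have hN : s * m + p = m + ((s - 1) * m + p) := by
    obtain ⟨u, rfl⟩ : ∃ u, s = u + 1 := ⟨s - 1, by omega⟩
    simp only [Nat.add_sub_cancel]; ring
  have hM := Mconst_pos hs
  have hζ := zetaC_pos (by omega : 1 ≤ s)
  have hterm := choose_mul_pow_mul_pow_le_add_pow (x := t / s) (y := ((s : ℝ) - 1) / s)
    (by positivity) (div_nonneg (by linarith) (by linarith)) m ((s - 1) * m + p)
  rw [mul_assoc, div_pow_mul_sub_one_div_pow_eq s m p hs, ← hN] at hterm
  have hsum : t / s + ((s : ℝ) - 1) / s = -((1 - t) / s) + 1 := by field_simp; ring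
  have hexp :
      (t / s + ((s : ℝ) - 1) / s) ^ (s * m + p) ≤ exp (-((1 - t) * (s * m + p) / s)) := by
    calc _ ≤ exp (-((1 - t) / s)) ^ (s * m + p) := by
          gcongr
          · exact add_nonneg (by positivity) (div_nonneg (by linarith) (by linarith))
          · rw [hsum]; exact add_one_le_exp _
      _ = exp (-((1 - t) * (s * m + p) / s)) := by
          rw [← exp_nat_mul]; push_cast; ring_nf
  calc ((s * m + p).choose m : ℝ)
      = (s * m + p).choose m * (t ^ m * zetaC s ^ m / Mconst s ^ p)
          * (Mconst s ^ p * (zetaC s)⁻¹ ^ m * t⁻¹ ^ m) := by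
        rw [mul_assoc, inv_pow, inv_pow]
        field_simp
    _ ≤ exp (-((1 - t) * (s * m + p) / s)) * (Mconst s ^ p * (zetaC s)⁻¹ ^ m * t⁻¹ ^ m) := by
        gcongr
        exact_mod_cast hterm.trans hexp
    _ = _ := by ring

lemma choose_le_exp_neg_mul (s : ℕ) (hs : 2 ≤ s) {θ : ℝ} (hθ : 0 < θ) :
    ∃ κ > 0, ∀ m p : ℕ, θ * m ≤ p →
      ((s * m + p).choose m : ℝ) ≤ Mconst s ^ p * (zetaC s)⁻¹ ^ m * exp (-(κ * p)) := by
  set η := θ / (2 * s) with hη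
  have hη0 : 0 < η := by positivity
  refine ⟨η / (2 * s * (1 + η)), by positivity, fun m p hmp => ?_⟩
  refine (choose_le_mul_inv_pow_mul_exp s m p hs (t := (1 + η)⁻¹) (by positivity)).trans ?_
  rw [inv_inv, mul_assoc]
  have hM := Mconst_pos hs
  have hζ := zetaC_pos (by omega : 1 ≤ s)
  gcongr
  have hgap : η * m - (1 - (1 + η)⁻¹) * (s * m + p) / s
      = -(η / (2 * s * (1 + η)) * p) + η / (2 * s * (1 + η)) * (θ * m - p) := by
    rw [hη]; field_simp; ring
  calc (1 + η) ^ m * exp (-((1 - (1 + η)⁻¹) * (s * m + p) / s))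
      ≤ exp η ^ m * exp (-((1 - (1 + η)⁻¹) * (s * m + p) / s)) := by
        gcongr
        linarith [add_one_le_exp η]
    _ = exp (-(η / (2 * s * (1 + η)) * p) + η / (2 * s * (1 + η)) * (θ * m - p)) := by
        rw [← exp_nat_mul, ← exp_add, ← hgap]; ring_nf
    _ ≤ exp (-(η / (2 * s * (1 + η)) * p)) := by
        gcongr
        exact add_le_of_nonpos_right (mul_nonpos_of_nonneg_of_nonpos (by positivity) (by linarith))

lemma exp_neg_mul_le_rpow_neg {ε x : ℝ} (hε : 0 < ε) (hx : 1 ≤ x) :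
    exp (-(ε * x)) ≤ 2 / ε ^ 2 * x ^ (-(3 : ℝ) / 2) := by
  have hx0 : 0 < x := by linarith
  have hpow : (x ^ 2)⁻¹ ≤ x ^ (-(3 : ℝ) / 2) := by
    rw [← Real.rpow_natCast, ← Real.rpow_neg hx0.le]
    exact Real.rpow_le_rpow_of_exponent_le hx (by norm_num)
  have hexp : (ε * x) ^ 2 / 2 ≤ exp (ε * x) := by
    simpa using pow_div_factorial_le_exp (x := ε * x) (by positivity) 2
  calc exp (-(ε * x)) = (exp (ε * x))⁻¹ := exp_neg _
    _ ≤ ((ε * x) ^ 2 / 2)⁻¹ := by gcongr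
    _ = 2 / ε ^ 2 * (x ^ 2)⁻¹ := by field_simp
    _ ≤ 2 / ε ^ 2 * x ^ (-(3 : ℝ) / 2) := by gcongr

lemma exp_neg_mul_le_rpow_neg_mul_exp {κ θ m p : ℝ} (hκ : 0 < κ) (hθ : 0 < θ) (hm : 1 ≤ m)
    (hmp : θ * m ≤ p) :
    exp (-(κ * p)) ≤ 2 / (κ / 2 * θ) ^ 2 * m ^ (-(3 : ℝ) / 2) * exp (-(κ / 2) * p) := by
  have hgain : κ / 2 * θ * m ≤ κ / 2 * p := by rw [mul_assoc]; gcongr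
  calc exp (-(κ * p)) = exp (-(κ / 2 * p)) * exp (-(κ / 2) * p) := by rw [← exp_add]; ring_nf
    _ ≤ exp (-(κ / 2 * θ * m)) * exp (-(κ / 2) * p) := by
        gcongr exp ?_ * _
        linarith
    _ ≤ 2 / (κ / 2 * θ) ^ 2 * m ^ (-(3 : ℝ) / 2) * exp (-(κ / 2) * p) := by
        gcongr
        exact exp_neg_mul_le_rpow_neg (by positivity) hm

/-- Uniform exponential gap away from the critical slope: for `p ≥ θ·m`,
`R_{s,p}(m) ≤ C·p·M^p·ζ_c^{-m}·m^{-3/2}·e^{-c·p}`. -/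
theorem stmt7 (s : ℕ) (hs : 2 ≤ s) (θ : ℝ) (hθ : 0 < θ) :
    ∃ C c : ℝ, 0 < C ∧ 0 < c ∧ ∀ p m : ℕ, 1 ≤ p → 1 ≤ m → θ * m ≤ (p : ℝ) →
      raney s p m ≤ C * p * Mconst s ^ p * (zetaC s)⁻¹ ^ m * (m : ℝ) ^ (-(3 : ℝ) / 2)
        * Real.exp (-c * p) := by
  obtain ⟨κ, hκ, hchoose⟩ := choose_le_exp_neg_mul s hs hθ
  have hM := Mconst_pos hs
  have hζ := zetaC_pos (by omega : 1 ≤ s)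
  set C := 2 / (κ / 2 * θ) ^ 2
  refine ⟨C, κ / 2, by positivity, by positivity, fun p m hp hm hmp => ?_⟩
  have hp1 : (1 : ℝ) ≤ p := by exact_mod_cast hp
  have hsplit := exp_neg_mul_le_rpow_neg_mul_exp hκ hθ (by exact_mod_cast hm) hmp
  calc raney s p m ≤ (s * m + p).choose m := raney_le_choose s p m
    _ ≤ Mconst s ^ p * (zetaC s)⁻¹ ^ m * exp (-(κ * p)) := hchoose m p hmp
    _ ≤ Mconst s ^ p * (zetaC s)⁻¹ ^ m
          * (C * (m : ℝ) ^ (-(3 : ℝ) / 2) * exp (-(κ / 2) * p)) := by gcongr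
    _ = C * 1 * Mconst s ^ p * (zetaC s)⁻¹ ^ m * (m : ℝ) ^ (-(3 : ℝ) / 2)
          * exp (-(κ / 2) * p) := by ring
    _ ≤ C * p * Mconst s ^ p * (zetaC s)⁻¹ ^ m * (m : ℝ) ^ (-(3 : ℝ) / 2)
          * exp (-(κ / 2) * p) := by gcongr
end

section
/- Fix integers s ≥ 2 and p ≥ 1 and a real number ζ > 0. The family of nonnegative reals m ↦ ((p+m·s)²/p)·R_{s,p}(m)²·ζ^{2m}, indexed by m ∈ ℕ, is summable if and only if ζ < ζ_c. -/
lemma zetaC_succ (t : ℕ) : zetaC (t + 1) = (t : ℝ) ^ t / ((t : ℝ) + 1) ^ (t + 1) := by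
  unfold zetaC; push_cast; ring_nf

lemma zetaC_pos_s9 {t : ℕ} (ht : 1 ≤ t) : 0 < zetaC (t + 1) := by
  rw [zetaC_succ]
  have h1 : (0:ℝ) < (t:ℝ) := by exact_mod_cast ht
  positivity

/-- Entropy upper bound: `C((t+1)m, m) ≤ ζ_c⁻ᵐ`. -/
lemma choose_upper (t : ℕ) (ht : 1 ≤ t) (m : ℕ) :
    (Nat.choose ((t + 1) * m) m : ℝ) * zetaC (t + 1) ^ m ≤ 1 := by
  have hT : (0:ℝ) < (t:ℝ) := by exact_mod_cast ht
  set T : ℝ := (t : ℝ)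
  have hx : (0:ℝ) ≤ 1 / (T + 1) := by positivity
  have hy : (0:ℝ) ≤ T / (T + 1) := by positivity
  have hsum : (1 / (T + 1) + T / (T + 1)) = 1 := by field_simp; ring
  have hmem : m ∈ Finset.range ((t + 1) * m + 1) := by
    simp [Nat.lt_succ_iff]
    nlinarith [Nat.le_mul_of_pos_left m (Nat.succ_pos t)]
  have hexp := add_pow (1 / (T + 1)) (T / (T + 1)) ((t + 1) * m)
  have hle : (1 / (T + 1)) ^ m * (T / (T + 1)) ^ ((t + 1) * m - m) * ((Nat.choose ((t+1)*m) m : ℕ) : ℝ)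
      ≤ (1 / (T + 1) + T / (T + 1)) ^ ((t + 1) * m) := by
    rw [hexp]
    apply Finset.single_le_sum (f := fun i => (1 / (T + 1)) ^ i * (T / (T + 1)) ^ ((t+1)*m - i) * ((Nat.choose ((t+1)*m) i : ℕ) : ℝ))
    · intro i _
      positivity
    · exact hmem
  rw [hsum, one_pow] at hle
  have hsub : (t + 1) * m - m = t * m := by ring_nf; omega
  rw [hsub] at hle
  have hkey : (1 / (T + 1)) ^ m * (T / (T + 1)) ^ (t * m) = zetaC (t + 1) ^ m := by
    rw [zetaC_succ, div_pow, div_pow, div_pow, one_pow, ← pow_mul, ← pow_mul]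
    rw [div_mul_div_comm, one_mul, ← pow_add]
    congr 1
    ring
  calc (Nat.choose ((t + 1) * m) m : ℝ) * zetaC (t + 1) ^ m
      = (1 / (T + 1)) ^ m * (T / (T + 1)) ^ (t * m) * (Nat.choose ((t+1)*m) m : ℝ) := by
        rw [hkey]; ring
    _ ≤ 1 := hle

/-- Shifting the top of the binomial coefficient by `p` costs at most `2^p`. -/
lemma choose_shift (s m p : ℕ) (hs : 2 ≤ s) :
    Nat.choose (s * m + p) m ≤ 2 ^ p * Nat.choose (s * m) m := by
  induction p with
  | zero => simp
  | succ p ih =>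
      have hstep : Nat.choose (s * m + p + 1) m ≤ 2 * Nat.choose (s * m + p) m := by
        rcases m with _ | k
        · simp
        · rw [Nat.choose_succ_succ']
          have h1 : Nat.choose (s * (k+1) + p) k ≤ Nat.choose (s * (k+1) + p) (k+1) := by
            apply Nat.choose_le_succ_of_lt_half_left
            have h2 : 2 * (k + 1) ≤ s * (k + 1) := Nat.mul_le_mul_right _ hs
            omega
          omega
      calc Nat.choose (s * m + (p + 1)) m
          = Nat.choose (s * m + p + 1) m := by ring_nf
        _ ≤ 2 * Nat.choose (s * m + p) m := hstep
        _ ≤ 2 * (2 ^ p * Nat.choose (s * m) m) := by omega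
        _ = 2 ^ (p + 1) * Nat.choose (s * m) m := by ring

lemma pow_identity_aux (t m : ℕ) (T M E : ℝ) (hE : E ≠ 0) (hT : T + 1 ≠ 0) :
    (((T+1)*M)/E)^((t+1)*m) * (T^t/(T+1)^(t+1))^m = (M/E)^m * ((T*M)/E)^(t*m) := by
  rw [div_pow, div_pow, div_pow, div_pow, mul_pow, mul_pow, ← pow_mul, ← pow_mul]
  field_simp
  ring

lemma pow_identity (t m : ℕ) :
    ((((t+1)*m : ℕ) : ℝ) / Real.exp 1) ^ ((t+1)*m) * zetaC (t+1) ^ m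
      = ((m : ℝ) / Real.exp 1) ^ m * (((t*m : ℕ) : ℝ) / Real.exp 1) ^ (t*m) := by
  have h1 : (((t+1)*m : ℕ) : ℝ) = ((t:ℝ)+1) * (m:ℝ) := by push_cast; ring
  have h2 : ((t*m : ℕ) : ℝ) = (t:ℝ) * (m:ℝ) := by push_cast; ring
  rw [h1, h2, zetaC_succ]
  exact pow_identity_aux t m (t:ℝ) (m:ℝ) (Real.exp 1) (Real.exp_pos 1).ne' (by positivity)

open Stirling in
lemma stirling_low (n : ℕ) (hn : 1 ≤ n) : Real.sqrt Real.pi ≤ stirlingSeq n := by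
  obtain ⟨k, rfl⟩ := Nat.exists_eq_add_of_le hn
  have := stirlingSeq'_antitone.le_of_tendsto
    (tendsto_stirlingSeq_sqrt_pi.comp (Filter.tendsto_add_atTop_nat 1)) k
  simpa [Nat.add_comm] using this

open Stirling in
lemma stirling_high (n : ℕ) (hn : 1 ≤ n) : stirlingSeq n ≤ stirlingSeq 1 := by
  obtain ⟨k, rfl⟩ := Nat.exists_eq_add_of_le hn
  simpa [Nat.add_comm] using stirlingSeq'_antitone (Nat.zero_le k)

open Stirling in
lemma factorial_eq (n : ℕ) (hn : 1 ≤ n) :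
    (n.factorial : ℝ) = stirlingSeq n * (Real.sqrt (2 * n) * ((n : ℝ) / Real.exp 1) ^ n) := by
  have h0 : (0:ℝ) < (n:ℝ) := by exact_mod_cast hn
  have h : Real.sqrt (2 * n) * ((n : ℝ) / Real.exp 1) ^ n ≠ 0 := by positivity
  rw [stirlingSeq, div_mul_cancel₀ _ h]

open Stirling in
/-- Stirling-type lower bound: `C((t+1)m, m)·ζ_cᵐ ≥ c/√m`. -/
lemma choose_lower (t : ℕ) (ht : 1 ≤ t) :
    ∃ c : ℝ, 0 < c ∧ ∀ m : ℕ, 1 ≤ m →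
      c / Real.sqrt m ≤ (Nat.choose ((t + 1) * m) m : ℝ) * zetaC (t + 1) ^ m := by
  have hA1pos : 0 < stirlingSeq 1 := stirlingSeq'_pos 0
  set A1 := stirlingSeq 1 with hA1
  have hπ : 0 < Real.sqrt Real.pi := Real.sqrt_pos.2 Real.pi_pos
  have htR : (1:ℝ) ≤ (t:ℝ) := by exact_mod_cast ht
  refine ⟨Real.sqrt Real.pi / (A1^2 * Real.sqrt (2*t)), by positivity, ?_⟩
  intro m hm
  have hk1 : 1 ≤ t * m := Nat.one_le_iff_ne_zero.2 (by positivity)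
  have hn1 : 1 ≤ (t+1) * m := Nat.one_le_iff_ne_zero.2 (by positivity)
  have hmn : m ≤ (t+1) * m := Nat.le_mul_of_pos_left m (by omega)
  have hmR : (0:ℝ) < (m:ℝ) := by exact_mod_cast hm
  have hkR : (0:ℝ) < ((t*m : ℕ):ℝ) := by exact_mod_cast hk1
  have hnR : (0:ℝ) < (((t+1)*m : ℕ):ℝ) := by exact_mod_cast hn1
  have hζ : 0 < zetaC (t+1) := zetaC_pos_s9 ht
  have hE : (0:ℝ) < Real.exp 1 := Real.exp_pos 1
  have hch : ((Nat.choose ((t+1)*m) m : ℕ) : ℝ)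
      = (((t+1)*m).factorial : ℝ) / ((m.factorial : ℝ) * (((t*m)).factorial : ℝ)) := by
    rw [Nat.cast_choose ℝ hmn]
    congr 3
    rw [Nat.succ_mul, Nat.add_sub_cancel]
  have hfn : Real.sqrt Real.pi * (Real.sqrt (2*((t+1)*m : ℕ)) * ((((t+1)*m : ℕ):ℝ)/Real.exp 1)^((t+1)*m))
      ≤ ((((t+1)*m).factorial : ℕ) : ℝ) := by
    rw [factorial_eq _ hn1]
    exact mul_le_mul_of_nonneg_right (stirling_low _ hn1) (by positivity)
  have hfm : ((m.factorial : ℕ) : ℝ) ≤ A1 * (Real.sqrt (2*m) * (((m:ℕ):ℝ)/Real.exp 1)^m) := by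
    rw [factorial_eq _ hm]
    exact mul_le_mul_of_nonneg_right (stirling_high _ hm) (by positivity)
  have hfk : (((t*m).factorial : ℕ) : ℝ)
      ≤ A1 * (Real.sqrt (2*(t*m : ℕ)) * (((t*m:ℕ):ℝ)/Real.exp 1)^(t*m)) := by
    rw [factorial_eq _ hk1]
    exact mul_le_mul_of_nonneg_right (stirling_high _ hk1) (by positivity)
  have hkey : Real.sqrt Real.pi * (Real.sqrt (2*((t+1)*m : ℕ)) * ((((t+1)*m:ℕ):ℝ)/Real.exp 1)^((t+1)*m)) * zetaC (t+1) ^ m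
        / (A1 * (Real.sqrt (2*m) * (((m:ℕ):ℝ)/Real.exp 1)^m) * (A1 * (Real.sqrt (2*(t*m:ℕ)) * (((t*m:ℕ):ℝ)/Real.exp 1)^(t*m))))
      ≤ (Nat.choose ((t+1)*m) m : ℝ) * zetaC (t+1) ^ m := by
    rw [hch, div_mul_eq_mul_div]
    apply div_le_div₀ (by positivity)
    · exact mul_le_mul_of_nonneg_right hfn (by positivity)
    · positivity
    · exact mul_le_mul hfm hfk (by positivity) (by positivity)
  refine le_trans ?_ hkey
  have hid := pow_identity t m
  have hPm : (0:ℝ) < ((m:ℝ)/Real.exp 1)^m := by positivity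
  have hPk : (0:ℝ) < (((t*m:ℕ):ℝ)/Real.exp 1)^(t*m) := by positivity
  have hs2m : (0:ℝ) < Real.sqrt (2*m) := Real.sqrt_pos.2 (by positivity)
  have hs2k : (0:ℝ) < Real.sqrt (2*(t*m:ℕ)) := Real.sqrt_pos.2 (by positivity)
  have hratio : Real.sqrt Real.pi * (Real.sqrt (2*((t+1)*m : ℕ)) * ((((t+1)*m:ℕ):ℝ)/Real.exp 1)^((t+1)*m)) * zetaC (t+1) ^ m
        / (A1 * (Real.sqrt (2*m) * (((m:ℕ):ℝ)/Real.exp 1)^m) * (A1 * (Real.sqrt (2*(t*m:ℕ)) * (((t*m:ℕ):ℝ)/Real.exp 1)^(t*m))))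
      = Real.sqrt Real.pi * Real.sqrt (2*((t+1)*m : ℕ)) / (A1^2 * (Real.sqrt (2*m) * Real.sqrt (2*(t*m:ℕ)))) := by
    rw [mul_assoc (Real.sqrt Real.pi), mul_assoc (Real.sqrt (2*((t+1)*m : ℕ))), hid]
    field_simp
  rw [hratio]
  have hsk : Real.sqrt (2*(t*m:ℕ)) = Real.sqrt (2*t) * Real.sqrt m := by
    rw [← Real.sqrt_mul (by positivity)]
    congr 1
    push_cast
    ring
  have hmono : Real.sqrt (2*(m:ℕ)) ≤ Real.sqrt (2*((t+1)*m : ℕ)) := by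
    apply Real.sqrt_le_sqrt
    have : (m:ℝ) ≤ (((t+1)*m : ℕ):ℝ) := by exact_mod_cast hmn
    linarith
  calc Real.sqrt Real.pi / (A1^2 * Real.sqrt (2*t)) / Real.sqrt m
      = Real.sqrt Real.pi * Real.sqrt (2*m) / (A1^2 * (Real.sqrt (2*m) * (Real.sqrt (2*t) * Real.sqrt m))) := by
        field_simp
    _ = Real.sqrt Real.pi * Real.sqrt (2*m) / (A1^2 * (Real.sqrt (2*m) * Real.sqrt (2*(t*m:ℕ)))) := by
        rw [hsk]
    _ ≤ Real.sqrt Real.pi * Real.sqrt (2*((t+1)*m : ℕ)) / (A1^2 * (Real.sqrt (2*m) * Real.sqrt (2*(t*m:ℕ)))) := by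
        gcongr

/-- Threshold for the Gram weights: the family
`m ↦ ((p+m·s)²/p)·R_{s,p}(m)²·ζ^{2m}` is summable iff `ζ < ζ_c`. -/
theorem stmt9 (s p : ℕ) (hs : 2 ≤ s) (hp : 1 ≤ p) (ζ : ℝ) (hζ : 0 < ζ) :
    Summable (fun m : ℕ => (((p : ℝ) + m * s) ^ 2 / p) * raney s p m ^ 2 * ζ ^ (2 * m))
      ↔ ζ < zetaC s := by
  obtain ⟨t, rfl⟩ : ∃ t, s = t + 1 := ⟨s - 1, by omega⟩
  have ht : 1 ≤ t := by omega
  have hζc : 0 < zetaC (t+1) := zetaC_pos_s9 ht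
  have hp0 : (0:ℝ) < (p:ℝ) := by exact_mod_cast hp
  -- the summand simplifies to `p · (C((t+1)m+p, m) · ζᵐ)²`
  have hterm : ∀ m : ℕ, (((p : ℝ) + m * ((t+1 : ℕ) : ℝ)) ^ 2 / p) * raney (t+1) p m ^ 2 * ζ ^ (2 * m)
      = (p : ℝ) * ((Nat.choose ((t+1) * m + p) m : ℝ) * ζ ^ m) ^ 2 := by
    intro m
    unfold raney
    have hden : (0:ℝ) < ((t+1:ℕ):ℝ) * m + p := by positivity
    have hden' : ((t+1:ℕ):ℝ) * m + p ≠ 0 := hden.ne'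
    rw [pow_mul]
    field_simp
    ring
  rw [funext hterm]
  constructor
  · -- summable → ζ < ζ_c
    intro hsum
    by_contra hlt
    push_neg at hlt  -- ζ_c ≤ ζ
    obtain ⟨c, hc, hcb⟩ := choose_lower t ht
    have hlow : ∀ m : ℕ, (p:ℝ) * c^2 * (1/(m:ℝ))
        ≤ (p : ℝ) * ((Nat.choose ((t+1) * m + p) m : ℝ) * ζ ^ m) ^ 2 := by
      intro m
      rcases Nat.eq_zero_or_pos m with rfl | hm
      · simp
      · have hmR : (0:ℝ) < (m:ℝ) := by exact_mod_cast hm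
        have h1 : c / Real.sqrt m ≤ (Nat.choose ((t+1)*m) m : ℝ) * zetaC (t+1) ^ m := hcb m hm
        have h2 : (Nat.choose ((t+1)*m) m : ℝ) * zetaC (t+1) ^ m
            ≤ (Nat.choose ((t+1)*m+p) m : ℝ) * ζ ^ m := by
          apply mul_le_mul
          · exact_mod_cast Nat.choose_le_choose m (Nat.le_add_right _ p)
          · exact pow_le_pow_left₀ hζc.le hlt m
          · positivity
          · positivity
        have h3 : c / Real.sqrt m ≤ (Nat.choose ((t+1)*m+p) m : ℝ) * ζ ^ m := le_trans h1 h2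
        have h4 : (c / Real.sqrt m)^2 ≤ ((Nat.choose ((t+1)*m+p) m : ℝ) * ζ ^ m)^2 := by
          apply pow_le_pow_left₀ (by positivity) h3
        have h5 : (c / Real.sqrt m)^2 = c^2 * (1/(m:ℝ)) := by
          rw [div_pow, Real.sq_sqrt hmR.le]
          ring
        rw [h5] at h4
        calc (p:ℝ) * c^2 * (1/(m:ℝ)) = (p:ℝ) * (c^2 * (1/(m:ℝ))) := by ring
          _ ≤ (p : ℝ) * ((Nat.choose ((t+1) * m + p) m : ℝ) * ζ ^ m) ^ 2 :=
            mul_le_mul_of_nonneg_left h4 hp0.le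
    have hsum2 : Summable (fun m : ℕ => (p:ℝ) * c^2 * (1/(m:ℝ))) :=
      Summable.of_nonneg_of_le (fun m => by positivity) hlow hsum
    have hne : (p:ℝ) * c^2 ≠ 0 := by positivity
    have : Summable (fun m : ℕ => (1/(m:ℝ))) := (summable_mul_left_iff hne).mp hsum2
    exact Real.not_summable_one_div_natCast this
  · -- ζ < ζ_c → summable
    intro hlt
    set r : ℝ := (ζ / zetaC (t+1))^2 with hr
    have hr0 : 0 ≤ r := by positivity
    have hr1 : r < 1 := by
      rw [hr]
      have : ζ / zetaC (t+1) < 1 := (div_lt_one hζc).2 hlt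
      nlinarith [div_pos hζ hζc]
    have hgs : Summable (fun m : ℕ => (p:ℝ) * (4:ℝ)^p * r^m) :=
      (summable_geometric_of_lt_one hr0 hr1).mul_left _
    refine Summable.of_nonneg_of_le (fun m => by positivity) (fun m => ?_) hgs
    have hub : (Nat.choose ((t+1)*m+p) m : ℝ) * ζ ^ m ≤ (2:ℝ)^p * (ζ / zetaC (t+1))^m := by
      have e1 : ζ ^ m = zetaC (t+1) ^ m * (ζ / zetaC (t+1))^m := by
        rw [← mul_pow, mul_div_cancel₀ _ hζc.ne']
      have e2 : (Nat.choose ((t+1)*m+p) m : ℝ) ≤ (2:ℝ)^p * (Nat.choose ((t+1)*m) m : ℝ) := by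
        have := choose_shift (t+1) m p (by omega)
        calc (Nat.choose ((t+1)*m+p) m : ℝ) ≤ ((2^p * Nat.choose ((t+1)*m) m : ℕ) : ℝ) := by
              exact_mod_cast this
          _ = (2:ℝ)^p * (Nat.choose ((t+1)*m) m : ℝ) := by push_cast; ring
      calc (Nat.choose ((t+1)*m+p) m : ℝ) * ζ ^ m
          = (Nat.choose ((t+1)*m+p) m : ℝ) * zetaC (t+1) ^ m * (ζ / zetaC (t+1))^m := by
            rw [e1]; ring
        _ ≤ (2:ℝ)^p * (Nat.choose ((t+1)*m) m : ℝ) * zetaC (t+1) ^ m * (ζ / zetaC (t+1))^m := by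
            gcongr
        _ = (2:ℝ)^p * ((Nat.choose ((t+1)*m) m : ℝ) * zetaC (t+1) ^ m) * (ζ / zetaC (t+1))^m := by
            ring
        _ ≤ (2:ℝ)^p * 1 * (ζ / zetaC (t+1))^m := by
            gcongr
            exact choose_upper t ht m
        _ = (2:ℝ)^p * (ζ / zetaC (t+1))^m := by ring
    have hsq : ((Nat.choose ((t+1)*m+p) m : ℝ) * ζ ^ m)^2 ≤ ((2:ℝ)^p * (ζ / zetaC (t+1))^m)^2 :=
      pow_le_pow_left₀ (by positivity) hub 2
    calc (p : ℝ) * ((Nat.choose ((t+1) * m + p) m : ℝ) * ζ ^ m) ^ 2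
        ≤ (p:ℝ) * ((2:ℝ)^p * (ζ / zetaC (t+1))^m)^2 := mul_le_mul_of_nonneg_left hsq hp0.le
      _ = (p:ℝ) * (4:ℝ)^p * r^m := by
          have h4 : ((2:ℝ)^p)^2 = (4:ℝ)^p := by
            rw [← pow_mul, mul_comm, pow_mul]; norm_num
          rw [hr, mul_pow, h4, ← pow_mul, mul_comm m 2, pow_mul]
          ring
end
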